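/- arXiv:2602.03862 — 5 statements merged into one kernel-verified Lean document; each statement's English description precedes it below -/
import Mathlib

section
/- If G is a finite simple graph in which every edge uv satisfies d(u)+d(v) ≤ 2k+1 for a positive integer k, then every subgraph of G has average degree at most 2k(k+1)/(2k+1); that is, mad(G) ≤ 2k(k+1)/(2k+1). -/
/-! Discharging: every vertex of a subgraph `H` spreads a unit charge evenly over its incident
edges, so an edge `uv` receives `1/d_H(u) + 1/d_H(v)`, which is at least `1/k + 1/(k+1)` because
`d_H(u) + d_H(v) ≤ 2k+1`. The total charge is at most `|V(H)|`, whence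
`|E(H)| (2k+1) / (k(k+1)) ≤ |V(H)|`. -/

open SimpleGraph

variable {V : Type*}

/-- Two edges are at distance at most 2 (they "see" each other): distinct and
some endpoint of one equals or is adjacent to some endpoint of the other. -/
def EdgeSees (G : SimpleGraph V) (e e' : Sym2 V) : Prop :=
  e ≠ e' ∧ ∃ a ∈ e, ∃ b ∈ e', a = b ∨ G.Adj a b

/-- `G` admits a strong `N`-edge-coloring. -/
def HasStrongColoring (G : SimpleGraph V) (N : ℕ) : Prop :=
  ∃ f : G.edgeSet → Fin N, ∀ e e' : G.edgeSet, EdgeSees G e.val e'.val → f e ≠ f e'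

/-- `G − v`: delete the vertex `v` (remove all edges incident to it). -/
def DelV (G : SimpleGraph V) (v : V) : SimpleGraph V where
  Adj a b := G.Adj a b ∧ a ≠ v ∧ b ≠ v
  symm := ⟨fun _ _ h => ⟨h.1.symm, h.2.2, h.2.1⟩⟩
  loopless := ⟨fun a h => G.loopless.irrefl a h.1⟩

open Finset

section Arithmetic

variable {K : Type*} [Field K] [LinearOrder K] [IsStrictOrderedRing K]

theorem inv_add_inv_succ_le_inv_add_inv {k a b : ℕ} (ha : 0 < a) (hb : 0 < b)
    (hab : a + b ≤ 2 * k + 1) :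
    (k : K)⁻¹ + ((k : K) + 1)⁻¹ ≤ (a : K)⁻¹ + (b : K)⁻¹ := by
  wlog hle : a ≤ b generalizing a b
  · rw [add_comm (a : K)⁻¹]
    exact this hb ha (by omega) (by omega)
  have hak : a ≤ k := by omega
  have ha' : (0 : K) < a := by exact_mod_cast ha
  have hb' : (0 : K) < b := by exact_mod_cast hb
  have hk' : (0 : K) < k := by exact_mod_cast ha.trans_le hak
  have hak' : (a : K) ≤ k := by exact_mod_cast hak
  have hab' : (a : K) + b ≤ 2 * k + 1 := by exact_mod_cast hab
  have hden : (a : K) * k ≤ (k + 1) * b := by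
    have : (a : K) ≤ b := by exact_mod_cast hle
    nlinarith
  suffices ((k : K) + 1)⁻¹ - (b : K)⁻¹ ≤ (a : K)⁻¹ - (k : K)⁻¹ by linarith
  calc ((k : K) + 1)⁻¹ - (b : K)⁻¹ = (b - (k + 1)) / ((k + 1) * b) :=
        inv_sub_inv (by positivity) hb'.ne'
    _ ≤ (k - a) / ((k + 1) * b) := div_le_div_of_nonneg_right (by linarith) (by positivity)
    _ ≤ (k - a) / (a * k) := div_le_div_of_nonneg_left (by linarith) (by positivity) hden
    _ = (a : K)⁻¹ - (k : K)⁻¹ := (inv_sub_inv ha'.ne' hk'.ne').symm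

end Arithmetic

namespace SimpleGraph

variable {W K : Type*} [Fintype W] (H : SimpleGraph W) [DecidableRel H.Adj]
  [Field K] [LinearOrder K] [IsStrictOrderedRing K]

theorem sum_darts_inv_degree_le_card :
    ∑ d : H.Dart, (H.degree d.fst : K)⁻¹ ≤ Fintype.card W := by
  classical
  rw [← sum_fiberwise_of_maps_to (g := fun d : H.Dart => d.fst) (t := univ)
    (fun _ _ => mem_univ _), Fintype.card_eq_sum_ones, Nat.cast_sum]
  refine sum_le_sum fun v _ => ?_
  rw [sum_congr rfl fun d hd => by rw [(mem_filter.1 hd).2], sum_const,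
    H.dart_fst_fiber_card_eq_degree v, nsmul_eq_mul, Nat.cast_one]
  exact mul_inv_le_one

theorem card_edgeFinset_mul_le_card_of_le_inv_add_inv {c : K}
    (h : ∀ u v, H.Adj u v → c ≤ (H.degree u : K)⁻¹ + (H.degree v : K)⁻¹) :
    #H.edgeFinset * c ≤ Fintype.card W := by
  have hswap : ∑ d : H.Dart, (H.degree d.snd : K)⁻¹ = ∑ d : H.Dart, (H.degree d.fst : K)⁻¹ :=
    Fintype.sum_bijective _ Dart.symm_involutive.bijective _ _ fun _ => rfl
  have := calc
    2 * (#H.edgeFinset * c) = ∑ _d : H.Dart, c := by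
      rw [sum_const, card_univ, H.dart_card_eq_twice_card_edges, nsmul_eq_mul]; push_cast; ring
    _ ≤ ∑ d : H.Dart, ((H.degree d.fst : K)⁻¹ + (H.degree d.snd : K)⁻¹) :=
      sum_le_sum fun d _ => h _ _ d.adj
    _ = 2 * ∑ d : H.Dart, (H.degree d.fst : K)⁻¹ := by rw [sum_add_distrib, hswap, two_mul]
    _ ≤ 2 * Fintype.card W := by gcongr; exact H.sum_darts_inv_degree_le_card
  linarith

end SimpleGraph

theorem SimpleGraph.Subgraph.ncard_edgeSet_eq_card_edgeFinset_coe {G : SimpleGraph V}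
    (G' : G.Subgraph) [Fintype G'.coe.edgeSet] : G'.edgeSet.ncard = #G'.coe.edgeFinset := by
  rw [← G'.image_coe_edgeSet_coe, Set.ncard_image_of_injective _
    (Sym2.map.injective Subtype.coe_injective), Set.ncard_eq_toFinset_card', edgeFinset]

/-- If every edge uv satisfies d(u)+d(v) ≤ 2k+1 (k ≥ 1), then every nonempty
subgraph has average degree at most 2k(k+1)/(2k+1), i.e. mad(G) ≤ 2k(k+1)/(2k+1). -/
theorem stmt0 [Fintype V] (G : SimpleGraph V) [DecidableRel G.Adj] (k : ℕ) (hk : 1 ≤ k)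
    (hore : ∀ u v, G.Adj u v → G.degree u + G.degree v ≤ 2 * k + 1) :
    ∀ G' : G.Subgraph, G'.verts.Nonempty →
      (2 * G'.edgeSet.ncard : ℚ) ≤ (2 * k * (k + 1) : ℚ) / (2 * k + 1) * G'.verts.ncard := by
  classical
  intro G' _
  have hk' : (0 : ℚ) < k := by exact_mod_cast hk
  have hcount := G'.coe.card_edgeFinset_mul_le_card_of_le_inv_add_inv
      (c := (k : ℚ)⁻¹ + ((k : ℚ) + 1)⁻¹) <| by
    intro u v huv
    rw [G'.coe_degree, G'.coe_degree]
    refine inv_add_inv_succ_le_inv_add_inv (G'.degree_pos_iff_exists_adj.2 ⟨v, huv⟩)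
      (G'.degree_pos_iff_exists_adj.2 ⟨u, huv.symm⟩) ?_
    exact (add_le_add (G'.degree_le u) (G'.degree_le v)).trans (hore _ _ (G'.adj_sub huv))
  rw [← G'.ncard_edgeSet_eq_card_edgeFinset_coe, ← Nat.card_eq_fintype_card, Nat.card_coe_set_eq,
    inv_add_inv hk'.ne' (by positivity), mul_div_assoc', div_le_iff₀ (by positivity)] at hcount
  rw [div_mul_eq_mul_div, le_div_iff₀ (by positivity)]
  linarith
end

section
/- Let G be a finite simple graph, v a vertex of G incident to edges e₁,…,e_k, and f a strong N-edge-coloring of G − v (i.e., of the subgraph obtained by deleting v and its incident edges). For each edge e incident to v, let L_f(e) be the set of colors in {1,…,N} not used by f on any edge of G − v at distance at most 2 from e in G. If, after some reordering, |L_f(e_i)| ≥ i for each i ∈ {1,…,k}, then f extends to a strong N-edge-coloring of G. -/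
/-!
Colour the edges at `v` greedily in the order `e₁, …, e_k`: when `e_i` is reached only
`i - 1` colours have been spent at `v`, so `L_f(e_i)` still offers a fresh one. Edges at `v`
pairwise see each other, so they need distinct colours; an edge at `v` and an edge of `G − v`
are separated because the former avoids `L_f`'s forbidden colours; and two edges of `G − v`
that see each other in `G` already do so in `G − v`, as the connecting edge avoids `v`.
-/

open SimpleGraph

variable {V : Type*}

lemma EdgeSees.symm {G : SimpleGraph V} {e e' : Sym2 V} (h : EdgeSees G e e') :
    EdgeSees G e' e := by
  obtain ⟨hne, a, ha, b, hb, hab⟩ := h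
  exact ⟨hne.symm, b, hb, a, ha, hab.imp Eq.symm G.adj_symm⟩

lemma mem_edgeSet_delV {G : SimpleGraph V} {v : V} {e : Sym2 V} :
    e ∈ (DelV G v).edgeSet ↔ e ∈ G.edgeSet ∧ v ∉ e := by
  induction e using Sym2.ind with
  | _ a b =>
    simp only [mem_edgeSet, DelV, Sym2.mem_iff, not_or, ne_comm]

lemma EdgeSees.delV {G : SimpleGraph V} {v : V} {e e' : Sym2 V} (h : EdgeSees G e e')
    (hv : v ∉ e) (hv' : v ∉ e') : EdgeSees (DelV G v) e e' := by
  obtain ⟨hne, a, ha, b, hb, hab⟩ := h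
  refine ⟨hne, a, ha, b, hb, hab.imp id fun hadj => ⟨hadj, ?_, ?_⟩⟩
  · rintro rfl; exact hv ha
  · rintro rfl; exact hv' hb

/-- Greedy: the `i`-th set has more than `i` elements, so one of them avoids the `i`
representatives already chosen. -/
lemma exists_injective_mem_of_succ_le_ncard {α : Type*} :
    ∀ {k : ℕ} (L : Fin k → Set α), (∀ i : Fin k, (i : ℕ) + 1 ≤ (L i).ncard) →
      ∃ c : Fin k → α, Function.Injective c ∧ ∀ i, c i ∈ L i
  | 0, _, _ => ⟨Fin.elim0, fun i => i.elim0, fun i => i.elim0⟩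
  | n + 1, L, hL => by
    obtain ⟨c, hc_inj, hc_mem⟩ :=
      exists_injective_mem_of_succ_le_ncard (fun i => L i.castSucc)
        fun i => by simpa using hL i.castSucc
    have hlt : (Set.range c).ncard < (L (Fin.last n)).ncard := by
      rw [Set.ncard_range_of_injective hc_inj, Nat.card_eq_fintype_card, Fintype.card_fin]
      simpa using hL (Fin.last n)
    obtain ⟨x, hxL, hxc⟩ := Set.exists_mem_notMem_of_ncard_lt_ncard hlt
    refine ⟨Fin.snoc c x, Fin.snoc_injective_of_injective hc_inj hxc, fun i => ?_⟩
    induction i using Fin.lastCases with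
    | last => simpa using hxL
    | cast i => simpa using hc_mem i

lemma exists_strong_extension {G : SimpleGraph V} {v : V} {N : ℕ}
    (f : (DelV G v).edgeSet → Fin N)
    (hf : ∀ e e' : (DelV G v).edgeSet, EdgeSees (DelV G v) e.val e'.val → f e ≠ f e')
    (c : {e : G.edgeSet // v ∈ e.val} → Fin N) (hc_inj : Function.Injective c)
    (hc_avail : ∀ e, ∀ e' : (DelV G v).edgeSet, EdgeSees G e.val.val e'.val → f e' ≠ c e) :
    ∃ g : G.edgeSet → Fin N,
      (∀ e e' : G.edgeSet, EdgeSees G e.val e'.val → g e ≠ g e') ∧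
      ∀ (e : Sym2 V) (he : e ∈ (DelV G v).edgeSet) (he' : e ∈ G.edgeSet),
        g ⟨e, he'⟩ = f ⟨e, he⟩ := by
  classical
  let g : G.edgeSet → Fin N := fun e =>
    if h : v ∈ e.val then c ⟨e, h⟩ else f ⟨e, mem_edgeSet_delV.2 ⟨e.property, h⟩⟩
  have star_vs_rest : ∀ e e' : G.edgeSet, v ∈ e.val → v ∉ e'.val →
      EdgeSees G e.val e'.val → g e ≠ g e' := by
    intro e e' h h' hsee
    simpa [g, h, h', eq_comm] using hc_avail ⟨e, h⟩ _ hsee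
  refine ⟨g, fun e e' hsee => ?_, fun e he he' => ?_⟩
  · by_cases h : v ∈ e.val <;> by_cases h' : v ∈ e'.val
    · simp only [g, h, h', dite_true]
      exact fun hcc => hsee.1 (congrArg (fun x => x.val.val) (hc_inj hcc))
    · exact star_vs_rest e e' h h' hsee
    · exact (star_vs_rest e' e h' h hsee.symm).symm
    · simp only [g, h, h', dite_false]
      exact hf _ _ (hsee.delV h h')
  · simp [g, (mem_edgeSet_delV.1 he).2]

theorem stmt2_general (G : SimpleGraph V) (v : V) (N k : ℕ)
    (f : (DelV G v).edgeSet → Fin N)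
    (hf : ∀ e e' : (DelV G v).edgeSet, EdgeSees (DelV G v) e.val e'.val → f e ≠ f e')
    (ε : Fin k → G.edgeSet)
    (hall : ∀ e : G.edgeSet, v ∈ e.val → ∃ i, ε i = e)
    (hL : ∀ i : Fin k,
      (i : ℕ) + 1 ≤ {c : Fin N | ∀ e' : (DelV G v).edgeSet,
        EdgeSees G (ε i).val e'.val → f e' ≠ c}.ncard) :
    ∃ g : G.edgeSet → Fin N,
      (∀ e e' : G.edgeSet, EdgeSees G e.val e'.val → g e ≠ g e') ∧
      ∀ (e : Sym2 V) (he : e ∈ (DelV G v).edgeSet) (he' : e ∈ G.edgeSet),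
        g ⟨e, he'⟩ = f ⟨e, he⟩ := by
  obtain ⟨c, hc_inj, hc_mem⟩ := exists_injective_mem_of_succ_le_ncard _ hL
  choose index hindex using hall
  refine exists_strong_extension f hf (fun e => c (index e e.2)) ?_ ?_
  · intro e e' h
    apply Subtype.ext
    rw [← hindex e e.2, ← hindex e' e'.2, hc_inj h]
  · intro e
    simpa only [Set.mem_ofPred_eq, hindex] using hc_mem (index e e.2)

/-- Extension lemma: if the edges incident to v can be ordered e₁,…,e_k with
|L_f(e_i)| ≥ i, then the strong N-edge-coloring f of G − v extends to G. -/
theorem stmt2 [Fintype V] (G : SimpleGraph V) (v : V) (N k : ℕ)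
    (f : (DelV G v).edgeSet → Fin N)
    (hf : ∀ e e' : (DelV G v).edgeSet, EdgeSees (DelV G v) e.val e'.val → f e ≠ f e')
    (ε : Fin k → G.edgeSet)
    (hinc : ∀ i, v ∈ (ε i).val)
    (hinj : Function.Injective ε)
    (hall : ∀ e : G.edgeSet, v ∈ e.val → ∃ i, ε i = e)
    (hL : ∀ i : Fin k,
      (i : ℕ) + 1 ≤ {c : Fin N | ∀ e' : (DelV G v).edgeSet,
        EdgeSees G (ε i).val e'.val → f e' ≠ c}.ncard) :
    ∃ g : G.edgeSet → Fin N,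
      (∀ e e' : G.edgeSet, EdgeSees G e.val e'.val → g e ≠ g e') ∧
      ∀ (e : Sym2 V) (he : e ∈ (DelV G v).edgeSet) (he' : e ∈ G.edgeSet),
        g ⟨e, he'⟩ = f ⟨e, he⟩ :=
  stmt2_general G v N k f hf ε hall hL
end

section
/- Let H be a vertex-minimal finite simple graph with θ(H) ≤ 7 and χ'_s(H) > 13. Then every vertex of degree 2 in H is adjacent to two vertices of degree 4. -/
open SimpleGraph

variable {V : Type*}

/-!
Let `v` be a vertex of degree 2 with neighbours `u` and `w`, and suppose `d(u) ≠ 4`. Colour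
`H - v` strongly with 13 colours; it remains to colour `vu` and `vw`. The Ore bound gives
`d(u), d(w) ≤ 5` and `d(x) ≤ 7 - d(u)` for every neighbour `x` of `u`, so at most
`d(w) - 1 + (d(u) - 1)(7 - d(u))` coloured edges are within distance 2 of `vu`. If `d(u) ≤ 3` or
`d(w) ≤ 3`, both edges can then be coloured greedily. If `d(u) = 5`, each edge `ux` with `x ≠ v`
sees at most 11 coloured edges, so it can be recoloured. When the greedy choice fails, the edges
seen from `vw` (if `d(w) = 4`), or from both `vu` and `vw` (if `d(w) = 5`), carry pairwise
distinct colours; recolouring one such edge `ux`, or `ux` and an edge `wy` out of its sight,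
frees a colour for each of `vu` and `vw`.
-/

open Finset

namespace SimpleGraph

variable {G : SimpleGraph V}

lemma EdgeSees.symm {e e' : Sym2 V} (h : EdgeSees G e e') : EdgeSees G e' e := by
  obtain ⟨hne, a, ha, b, hb, hab⟩ := h
  exact ⟨hne.symm, b, hb, a, ha, hab.imp Eq.symm Adj.symm⟩

lemma not_edgeSees_of_forall {e e' : Sym2 V} (h : ∀ p ∈ e, ∀ q ∈ e', p ≠ q ∧ ¬ G.Adj p q) :
    ¬ EdgeSees G e e' := fun ⟨_, p, hp, q, hq, hpq⟩ =>
  hpq.elim (h p hp q hq).1 (h p hp q hq).2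

lemma delV_eq_deleteIncidenceSet (v : V) : DelV G v = G.deleteIncidenceSet v := by
  ext a b
  rw [deleteIncidenceSet_adj]
  rfl

lemma EdgeSees.deleteIncidenceSet {v : V} {e e' : Sym2 V} (h : EdgeSees G e e')
    (he : e ∈ (G.deleteIncidenceSet v).edgeSet) (he' : e' ∈ (G.deleteIncidenceSet v).edgeSet) :
    EdgeSees (G.deleteIncidenceSet v) e e' := by
  obtain ⟨hne, a, ha, b, hb, hab⟩ := h
  rw [edgeSet_deleteIncidenceSet] at he he'
  refine ⟨hne, a, ha, b, hb, hab.imp id fun hab => ?_⟩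
  rw [deleteIncidenceSet_adj]
  refine ⟨hab, ?_, ?_⟩ <;> rintro rfl
  exacts [he.2 ⟨he.1, ha⟩, he'.2 ⟨he'.1, hb⟩]

def IsStrongColoringOn {α : Type*} (G : SimpleGraph V) (S : Finset (Sym2 V))
    (g : Sym2 V → α) : Prop :=
  ∀ e ∈ S, ∀ e' ∈ S, EdgeSees G e e' → g e ≠ g e'

open Classical in
noncomputable def seenEdges (G : SimpleGraph V) (S : Finset (Sym2 V)) (t : Sym2 V) :
    Finset (Sym2 V) :=
  S.filter (EdgeSees G t)

@[simp]
lemma mem_seenEdges {S : Finset (Sym2 V)} {t e : Sym2 V} :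
    e ∈ seenEdges G S t ↔ e ∈ S ∧ EdgeSees G t e := by
  simp [seenEdges]

noncomputable def forbiddenColors {α : Type*} [DecidableEq α] (G : SimpleGraph V)
    (S : Finset (Sym2 V)) (g : Sym2 V → α) (t : Sym2 V) : Finset α :=
  (seenEdges G S t).image g

section Coloring

variable {α : Type*} [DecidableEq α] {S : Finset (Sym2 V)} {g : Sym2 V → α}
  {t e₀ : Sym2 V} {c : α}

lemma mem_forbiddenColors :
    c ∈ forbiddenColors G S g t ↔ ∃ e ∈ S, EdgeSees G t e ∧ g e = c := by
  simp [forbiddenColors, and_assoc]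

lemma card_forbiddenColors_le (G : SimpleGraph V) (S : Finset (Sym2 V)) (g : Sym2 V → α)
    (t : Sym2 V) : #(forbiddenColors G S g t) ≤ #(seenEdges G S t) :=
  Finset.card_image_le

lemma notMem_forbiddenColors_update [DecidableEq V] {x : α} (hx : x ≠ c)
    (h : ∀ e ∈ seenEdges G S t, e ≠ e₀ → g e ≠ x) :
    x ∉ forbiddenColors G S (Function.update g e₀ c) t := by
  simp only [forbiddenColors, Finset.mem_image, not_exists, not_and]
  intro e he
  rcases eq_or_ne e e₀ with rfl | hne
  · simpa using hx.symm
  · simpa [Function.update_of_ne hne] using h e he hne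

lemma forbiddenColors_update_of_notMem [DecidableEq V] (h : e₀ ∉ seenEdges G S t) :
    forbiddenColors G S (Function.update g e₀ c) t = forbiddenColors G S g t :=
  Finset.image_congr fun _ he => Function.update_of_ne (ne_of_mem_of_not_mem he h) _ _

lemma IsStrongColoringOn.update [DecidableEq V] (hg : IsStrongColoringOn G S g)
    (hc : c ∉ forbiddenColors G S g t) :
    IsStrongColoringOn G (insert t S) (Function.update g t c) := by
  have hfree : ∀ e ∈ insert t S, EdgeSees G t e → g e ≠ c := fun e he hte hec =>
    hc (mem_forbiddenColors.2 ⟨e, (Finset.mem_insert.1 he).resolve_left hte.1.symm, hte, hec⟩)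
  intro e he e' he' hee'
  rcases eq_or_ne e t with rfl | het
  · rw [Function.update_self, Function.update_of_ne hee'.1.symm]
    exact (hfree e' he' hee').symm
  rcases eq_or_ne e' t with rfl | het'
  · rw [Function.update_self, Function.update_of_ne het]
    exact hfree e he hee'.symm
  rw [Function.update_of_ne het, Function.update_of_ne het']
  exact hg e ((Finset.mem_insert.1 he).resolve_left het) e'
    ((Finset.mem_insert.1 he').resolve_left het') hee'

lemma IsStrongColoringOn.recolor [DecidableEq V] (hg : IsStrongColoringOn G S g) (he₀ : e₀ ∈ S)
    (hc : c ∉ forbiddenColors G S g e₀) :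
    IsStrongColoringOn G S (Function.update g e₀ c) := by
  simpa [Finset.insert_eq_of_mem he₀] using hg.update hc

lemma IsStrongColoringOn.hasStrongColoring {n : ℕ} {g : Sym2 V → Fin n}
    (hg : IsStrongColoringOn G S g) (hS : G.edgeSet = S) : HasStrongColoring G n :=
  ⟨fun e => g e, fun e e' h => hg e (by simpa [hS] using e.2) e' (by simpa [hS] using e'.2) h⟩

end Coloring

lemma exists_notMem_of_card_lt {n : ℕ} {F : Finset (Fin n)} (h : #F < n) : ∃ c, c ∉ F := by
  obtain ⟨c, -, hc⟩ := exists_mem_notMem_of_card_lt_card (s := F) (t := univ)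
    (by rwa [card_univ, Fintype.card_fin])
  exact ⟨c, hc⟩

lemma exists_ne_of_card_inter {n : ℕ} {F₁ F₂ : Finset (Fin n)} (h₁ : #F₁ < n) (h₂ : #F₂ < n)
    (h : #(F₁ ∩ F₂) + 2 ≤ n) : ∃ c₁ ∉ F₁, ∃ c₂ ∉ F₂, c₁ ≠ c₂ := by
  obtain ⟨a, ha⟩ := exists_notMem_of_card_lt h₁
  obtain ⟨b, hb⟩ := exists_notMem_of_card_lt h₂
  rcases eq_or_ne a b with rfl | hab
  · have : 1 < #(F₁ ∩ F₂)ᶜ := by rw [card_compl, Fintype.card_fin]; omega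
    obtain ⟨c, hc, hca⟩ := exists_mem_ne this a
    rw [mem_compl, mem_inter, not_and_or] at hc
    rcases hc with hc | hc
    exacts [⟨c, hc, a, hb, hca⟩, ⟨a, ha, c, hc, hca.symm⟩]
  · exact ⟨a, ha, b, hb, hab⟩

section Extension

variable [DecidableEq V] {n : ℕ} {S : Finset (Sym2 V)} {g : Sym2 V → Fin n} {t₁ t₂ : Sym2 V}

lemma IsStrongColoringOn.hasStrongColoring_of_notMem (hg : IsStrongColoringOn G S g)
    (hE : G.edgeSet = ↑(insert t₁ (insert t₂ S))) {c₁ c₂ : Fin n}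
    (h₁ : c₁ ∉ forbiddenColors G S g t₁) (h₂ : c₂ ∉ forbiddenColors G S g t₂) (hc : c₁ ≠ c₂) :
    HasStrongColoring G n := by
  refine ((hg.update h₂).update (c := c₁) ?_).hasStrongColoring hE
  rw [mem_forbiddenColors]
  rintro ⟨e, he, hte, hec⟩
  rcases eq_or_ne e t₂ with rfl | het₂
  · exact hc (by simpa using hec.symm)
  · rw [Function.update_of_ne het₂] at hec
    exact h₁ (mem_forbiddenColors.2 ⟨e, (mem_insert.1 he).resolve_left het₂, hte, hec⟩)

lemma IsStrongColoringOn.hasStrongColoring_of_card (hg : IsStrongColoringOn G S g)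
    (hE : G.edgeSet = ↑(insert t₁ (insert t₂ S)))
    (h₁ : #(forbiddenColors G S g t₁) < n) (h₂ : #(forbiddenColors G S g t₂) < n)
    (h : #(forbiddenColors G S g t₁ ∩ forbiddenColors G S g t₂) + 2 ≤ n) :
    HasStrongColoring G n := by
  obtain ⟨c₁, hc₁, c₂, hc₂, hc⟩ := exists_ne_of_card_inter h₁ h₂ h
  exact hg.hasStrongColoring_of_notMem hE hc₁ hc₂ hc

lemma IsStrongColoringOn.hasStrongColoring_of_card_seenEdges (hg : IsStrongColoringOn G S g)
    (hE : G.edgeSet = ↑(insert t₁ (insert t₂ S)))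
    (h₁ : #(seenEdges G S t₁) < n) (h₂ : #(seenEdges G S t₂) + 2 ≤ n) :
    HasStrongColoring G n := by
  have := card_le_card (inter_subset_right (s₁ := forbiddenColors G S g t₁)
    (s₂ := forbiddenColors G S g t₂))
  have := card_forbiddenColors_le G S g t₁
  have := card_forbiddenColors_le G S g t₂
  exact hg.hasStrongColoring_of_card hE (by omega) (by omega) (by omega)

lemma notMem_forbiddenColors_update_of_injOn {e₀ : Sym2 V} {c : Fin n}
    (hinj : Set.InjOn g (seenEdges G S t₁)) (he₀ : e₀ ∈ seenEdges G S t₁) (hc : c ≠ g e₀) :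
    g e₀ ∉ forbiddenColors G S (Function.update g e₀ c) t₁ :=
  notMem_forbiddenColors_update hc.symm fun _ he hne heq => hne (hinj he he₀ heq)

lemma IsStrongColoringOn.hasStrongColoring_of_recolor (hg : IsStrongColoringOn G S g)
    (hE : G.edgeSet = ↑(insert t₁ (insert t₂ S))) {e₀ : Sym2 V} (he₀ : e₀ ∈ seenEdges G S t₂)
    (h₀ : #(seenEdges G S e₀) + 2 ≤ n) (h₁ : #(seenEdges G S t₁) + 2 ≤ n)
    (h₂ : #(seenEdges G S t₂) ≤ n) : HasStrongColoring G n := by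
  have hF₁ : ∀ g' : Sym2 V → Fin n, #(forbiddenColors G S g' t₁) < n ∧
      #(forbiddenColors G S g' t₁ ∩ forbiddenColors G S g' t₂) + 2 ≤ n := fun g' => by
    have := card_le_card (inter_subset_left (s₁ := forbiddenColors G S g' t₁)
      (s₂ := forbiddenColors G S g' t₂))
    have := card_forbiddenColors_le G S g' t₁
    omega
  by_cases hF : #(forbiddenColors G S g t₂) < n
  · exact hg.hasStrongColoring_of_card hE (hF₁ g).1 hF (hF₁ g).2
  -- every colour is forbidden at `t₂`, so `g` is injective on the edges seen from `t₂`
  have hinj : Set.InjOn g (seenEdges G S t₂) :=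
    card_image_iff.1 (le_antisymm card_image_le (by rw [← forbiddenColors]; omega))
  obtain ⟨c, hc⟩ := exists_notMem_of_card_lt (F := insert (g e₀) (forbiddenColors G S g e₀))
    ((card_insert_le _ _).trans_lt (by have := card_forbiddenColors_le G S g e₀; omega))
  rw [mem_insert, not_or] at hc
  exact (hg.recolor (mem_seenEdges.1 he₀).1 hc.2).hasStrongColoring_of_card hE (hF₁ _).1
    ((card_lt_univ_of_notMem (notMem_forbiddenColors_update_of_injOn hinj he₀ hc.1)).trans_eq
      (Fintype.card_fin n))
    (hF₁ _).2

lemma IsStrongColoringOn.hasStrongColoring_of_recolor_avoiding (hg : IsStrongColoringOn G S g)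
    (hE : G.edgeSet = ↑(insert t₁ (insert t₂ S)))
    (hinj₁ : Set.InjOn g (seenEdges G S t₁)) (hinj₂ : Set.InjOn g (seenEdges G S t₂)) {a : Fin n}
    (ha₁ : a ∉ forbiddenColors G S g t₁) (ha₂ : a ∉ forbiddenColors G S g t₂) {e₀ : Sym2 V}
    (he₁ : e₀ ∈ seenEdges G S t₁) (he₂ : e₀ ∈ seenEdges G S t₂) {c : Fin n}
    (hc : c ∉ forbiddenColors G S g e₀) (hce : c ≠ g e₀) (hca : c ≠ a) :
    HasStrongColoring G n := by
  have hfree : ∀ {t}, Set.InjOn g (seenEdges G S t) → e₀ ∈ seenEdges G S t →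
      a ∉ forbiddenColors G S g t → g e₀ ∉ forbiddenColors G S (Function.update g e₀ c) t ∧
        a ∉ forbiddenColors G S (Function.update g e₀ c) t := fun hinj he ha =>
    ⟨notMem_forbiddenColors_update_of_injOn hinj he hce,
      notMem_forbiddenColors_update hca.symm fun _ he' _ heq =>
        ha (heq ▸ mem_image_of_mem g he')⟩
  have hae : g e₀ ≠ a := fun h => ha₁ (h ▸ mem_image_of_mem g he₁)
  obtain ⟨hα₁, ha₁'⟩ := hfree hinj₁ he₁ ha₁
  obtain ⟨hα₂, ha₂'⟩ := hfree hinj₂ he₂ ha₂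
  have hsub : forbiddenColors G S (Function.update g e₀ c) t₁ ∩
      forbiddenColors G S (Function.update g e₀ c) t₂ ⊆ (univ.erase (g e₀)).erase a := by
    intro x hx
    rw [mem_inter] at hx
    simp only [mem_erase, mem_univ, and_true]
    exact ⟨fun h => ha₁' (h ▸ hx.1), fun h => hα₁ (h ▸ hx.1)⟩
  have := card_le_card hsub
  rw [card_erase_of_mem (by simpa using hae.symm), card_erase_of_mem (mem_univ _), card_univ,
    Fintype.card_fin] at this
  exact (hg.recolor (mem_seenEdges.1 he₁).1 hc).hasStrongColoring_of_card hE
    ((card_lt_univ_of_notMem ha₁').trans_eq (Fintype.card_fin n))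
    ((card_lt_univ_of_notMem ha₂').trans_eq (Fintype.card_fin n)) (by omega)

lemma IsStrongColoringOn.hasStrongColoring_of_double_recolor (hg : IsStrongColoringOn G S g)
    (hE : G.edgeSet = ↑(insert t₁ (insert t₂ S)))
    (hinj₁ : Set.InjOn g (seenEdges G S t₁)) (hinj₂ : Set.InjOn g (seenEdges G S t₂)) {a : Fin n}
    (ha₁ : a ∉ forbiddenColors G S g t₁) (ha₂ : a ∉ forbiddenColors G S g t₂) {e₁ e₂ : Sym2 V}
    (he₁ : e₁ ∈ seenEdges G S t₁ ∧ e₁ ∈ seenEdges G S t₂)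
    (he₂ : e₂ ∈ seenEdges G S t₁ ∧ e₂ ∈ seenEdges G S t₂) (hne : e₁ ≠ e₂)
    (hsees : ¬ EdgeSees G e₂ e₁) (hae₁ : a ∉ forbiddenColors G S g e₁)
    (hae₂ : a ∉ forbiddenColors G S g e₂) : HasStrongColoring G n := by
  have hg₁ := hg.recolor (mem_seenEdges.1 he₁.1).1 hae₁
  have hg₂ := hg₁.recolor (mem_seenEdges.1 he₂.1).1 (e₀ := e₂) (c := a) (by
    rwa [forbiddenColors_update_of_notMem fun h => hsees (mem_seenEdges.1 h).2])
  have hne₁ : a ≠ g e₁ := fun h => ha₁ (h ▸ mem_image_of_mem g he₁.1)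
  have hne₂ : a ≠ g e₂ := fun h => ha₂ (h ▸ mem_image_of_mem g he₂.2)
  -- after both recolourings, `t₁` may take the old colour of `e₁` and `t₂` that of `e₂`
  refine hg₂.hasStrongColoring_of_notMem hE (c₁ := g e₁) (c₂ := g e₂) ?_ ?_
    fun h => hne (hinj₂ he₁.2 he₂.2 h)
  · refine notMem_forbiddenColors_update hne₁.symm fun e he _ => ?_
    rcases eq_or_ne e e₁ with rfl | h
    · simpa using hne₁
    · rw [Function.update_of_ne h]
      exact fun heq => h (hinj₁ he he₁.1 heq)
  · refine notMem_forbiddenColors_update hne₂.symm fun e he hee₂ => ?_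
    rcases eq_or_ne e e₁ with rfl | h
    · simpa using hne₂
    · rw [Function.update_of_ne h]
      exact fun heq => hee₂ (hinj₂ he he₂.2 heq)

lemma IsStrongColoringOn.hasStrongColoring_of_invisible_pair (hg : IsStrongColoringOn G S g)
    (hE : G.edgeSet = ↑(insert t₁ (insert t₂ S)))
    (h₁ : #(seenEdges G S t₁) < n) (h₂ : #(seenEdges G S t₂) < n) {e₁ e₂ : Sym2 V}
    (he₁ : e₁ ∈ seenEdges G S t₁ ∧ e₁ ∈ seenEdges G S t₂)
    (he₂ : e₂ ∈ seenEdges G S t₁ ∧ e₂ ∈ seenEdges G S t₂) (hne : e₁ ≠ e₂)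
    (hsees : ¬ EdgeSees G e₂ e₁) (hse₁ : #(seenEdges G S e₁) + 2 ≤ n)
    (hse₂ : #(seenEdges G S e₂) + 2 ≤ n) : HasStrongColoring G n := by
  have hF₁ := card_forbiddenColors_le G S g t₁
  have hF₂ := card_forbiddenColors_le G S g t₂
  by_cases h : #(forbiddenColors G S g t₁ ∩ forbiddenColors G S g t₂) + 2 ≤ n
  · exact hg.hasStrongColoring_of_card hE (by omega) (by omega) h
  -- otherwise both forbidden sets are the same `n - 1` colours, each seen edge coloured differently
  have := card_le_card (inter_subset_left (s₁ := forbiddenColors G S g t₁)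
    (s₂ := forbiddenColors G S g t₂))
  have := card_le_card (inter_subset_right (s₁ := forbiddenColors G S g t₁)
    (s₂ := forbiddenColors G S g t₂))
  have hinj₁ : Set.InjOn g (seenEdges G S t₁) :=
    card_image_iff.1 (le_antisymm card_image_le (by rw [← forbiddenColors]; omega))
  have hinj₂ : Set.InjOn g (seenEdges G S t₂) :=
    card_image_iff.1 (le_antisymm card_image_le (by rw [← forbiddenColors]; omega))
  obtain ⟨a, ha⟩ := exists_notMem_of_card_lt
    (F := forbiddenColors G S g t₁ ∪ forbiddenColors G S g t₂)
    (by have := card_union_add_card_inter (forbiddenColors G S g t₁) (forbiddenColors G S g t₂)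
        omega)
  rw [mem_union, not_or] at ha
  have hfree : ∀ {e}, e ∈ seenEdges G S t₁ ∧ e ∈ seenEdges G S t₂ →
      #(seenEdges G S e) + 2 ≤ n → HasStrongColoring G n ∨ a ∉ forbiddenColors G S g e := by
    intro e he hse
    obtain ⟨c, hc⟩ := exists_notMem_of_card_lt (F := insert (g e) (forbiddenColors G S g e))
      ((card_insert_le _ _).trans_lt (by have := card_forbiddenColors_le G S g e; omega))
    rw [mem_insert, not_or] at hc
    rcases eq_or_ne c a with rfl | hca
    · exact Or.inr hc.2
    · exact Or.inl (hg.hasStrongColoring_of_recolor_avoiding hE hinj₁ hinj₂ ha.1 ha.2 he.1 he.2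
        hc.2 hc.1 hca)
  rcases hfree he₁ hse₁ with h | hae₁
  · exact h
  rcases hfree he₂ hse₂ with h | hae₂
  · exact h
  exact hg.hasStrongColoring_of_double_recolor hE hinj₁ hinj₂ ha.1 ha.2 he₁ he₂ hne hsees hae₁ hae₂

end Extension

section Counting

variable [Fintype V] [DecidableEq V] {K : SimpleGraph V} [DecidableRel G.Adj] [DecidableRel K.Adj]
  {a b v : V}

/-- The edges of `K` seen from the edge `s(a, b)` of `G` through its endpoint `a`; an edge at a
neighbour `x` of `a` is charged to `x` only when it is not already an edge at `a`. -/
def nearEdges (G K : SimpleGraph V) [DecidableRel G.Adj] [DecidableRel K.Adj] (a b : V) :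
    Finset (Sym2 V) :=
  (K.incidenceFinset a).erase s(a, b) ∪
    ((G.neighborFinset a).erase b).biUnion fun x => K.incidenceFinset x \ K.incidenceFinset a

lemma mem_nearEdges_union {e : Sym2 V} {q : V} (he : e ∈ K.edgeSet) (hne : s(a, b) ≠ e)
    (hq : q ∈ e) (haq : a = q ∨ G.Adj a q) : e ∈ nearEdges G K a b ∪ nearEdges G K b a := by
  have hinc : ∀ x ∈ e, e ∈ K.incidenceFinset x := fun x hx => by
    simpa [mem_incidenceFinset] using ⟨he, hx⟩
  simp only [nearEdges, mem_union, mem_erase, mem_biUnion, mem_sdiff, mem_neighborFinset]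
  rcases haq with rfl | hadj
  · exact Or.inl (Or.inl ⟨hne.symm, hinc a hq⟩)
  rcases eq_or_ne q b with rfl | hqb
  · exact Or.inr (Or.inl ⟨by rwa [Sym2.eq_swap, ne_comm], hinc q hq⟩)
  by_cases hea : e ∈ K.incidenceFinset a
  · exact Or.inl (Or.inl ⟨hne.symm, hea⟩)
  · exact Or.inl (Or.inr ⟨q, ⟨hqb, hadj⟩, hinc q hq, hea⟩)

lemma seenEdges_subset_nearEdges :
    seenEdges G K.edgeFinset s(a, b) ⊆ nearEdges G K a b ∪ nearEdges G K b a := by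
  intro e he
  obtain ⟨heK, hne, p, hp, q, hq, hpq⟩ := mem_seenEdges.1 he
  rw [mem_edgeFinset] at heK
  rcases Sym2.mem_iff.1 hp with rfl | rfl
  · exact mem_nearEdges_union heK hne hq hpq
  · rw [union_comm]
    exact mem_nearEdges_union heK (by rwa [Sym2.eq_swap]) hq hpq

lemma card_nearEdges_le : #(nearEdges G K a b) ≤ #((K.incidenceFinset a).erase s(a, b)) +
    ∑ x ∈ (G.neighborFinset a).erase b, #(K.incidenceFinset x \ K.incidenceFinset a) :=
  (card_union_le _ _).trans (Nat.add_le_add_left card_biUnion_le _)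

lemma card_incidenceFinset_sdiff_le (hKG : K ≤ G) {x : V} (hax : G.Adj a x) :
    #(K.incidenceFinset x \ K.incidenceFinset a) ≤ G.degree x - 1 := by
  rw [← card_incidenceFinset_eq_degree,
    ← card_erase_of_mem (a := s(x, a)) (by simpa using hax.symm)]
  refine card_le_card fun e he => ?_
  simp only [mem_sdiff, mem_incidenceFinset, incidenceSet, Set.mem_ofPred_eq] at he
  simp only [mem_erase, mem_incidenceFinset, incidenceSet, Set.mem_ofPred_eq]
  refine ⟨?_, edgeSet_mono hKG he.1.1, he.1.2⟩
  rintro rfl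
  exact he.2 ⟨he.1.1, Sym2.mem_mk_right x a⟩

@[simp]
lemma incidenceFinset_deleteIncidenceSet_self :
    (G.deleteIncidenceSet v).incidenceFinset v = ∅ := by
  ext e
  simp [mem_incidenceFinset, incidenceSet, edgeSet_deleteIncidenceSet]

lemma mk_mem_edgeFinset_deleteIncidenceSet {x y : V} (h : G.Adj x y) (hx : x ≠ v) (hy : y ≠ v) :
    s(x, y) ∈ (G.deleteIncidenceSet v).edgeFinset := by
  simp [deleteIncidenceSet_adj, h, hx, hy]

lemma erase_incidenceFinset_deleteIncidenceSet_subset :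
    ((G.deleteIncidenceSet v).incidenceFinset a).erase s(a, b) ⊆
      (((G.neighborFinset a).erase b).erase v).image fun x => s(a, x) := by
  intro e he
  obtain ⟨hne, he⟩ := mem_erase.1 he
  rw [mem_incidenceFinset] at he
  obtain ⟨x, rfl⟩ := Sym2.mem_iff_exists.1 he.2
  rw [mem_incidenceSet, deleteIncidenceSet_adj] at he
  refine mem_image.2 ⟨x, ?_, rfl⟩
  simp only [mem_erase, mem_neighborFinset]
  exact ⟨he.2.2, fun h => hne (h ▸ rfl), he.1⟩

lemma card_nearEdges_le_of_ore {k : ℕ} (hore : ∀ x y, G.Adj x y → G.degree x + G.degree y ≤ k)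
    (hab : G.Adj a b) :
    #(nearEdges G (G.deleteIncidenceSet v) a b) ≤
      #(((G.neighborFinset a).erase b).erase v) * (k - G.degree a) := by
  have hfirst := (card_le_card (erase_incidenceFinset_deleteIncidenceSet_subset
    (G := G) (v := v) (a := a) (b := b))).trans card_image_le
  have hb : 0 < G.degree b := (G.degree_pos_iff_exists_adj b).2 ⟨a, hab.symm⟩
  have hk := hore a b hab
  have hsum : ∑ x ∈ (G.neighborFinset a).erase b,
      #((G.deleteIncidenceSet v).incidenceFinset x \ (G.deleteIncidenceSet v).incidenceFinset a) ≤
      #(((G.neighborFinset a).erase b).erase v) * (k - G.degree a - 1) := by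
    rw [← sum_erase _ (a := v) (by simp)]
    refine sum_le_card_nsmul _ _ _ fun x hx => ?_
    have hax : G.Adj a x := by simpa using (mem_erase.1 (mem_erase.1 hx).2).2
    have := card_incidenceFinset_sdiff_le (deleteIncidenceSet_le G v) hax
    have := hore a x hax
    omega
  calc #(nearEdges G (G.deleteIncidenceSet v) a b)
      _ ≤ #(((G.neighborFinset a).erase b).erase v) +
          #(((G.neighborFinset a).erase b).erase v) * (k - G.degree a - 1) :=
        card_nearEdges_le.trans (Nat.add_le_add hfirst hsum)
      _ = #(((G.neighborFinset a).erase b).erase v) * (k - G.degree a) := by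
        rw [add_comm, ← Nat.mul_succ]
        congr 1
        omega

end Counting

section Configuration

variable [Fintype V] [DecidableEq V] [DecidableRel G.Adj] {v u w : V}

lemma edgeSet_eq_insert_insert (hN : G.neighborFinset v = {u, w}) :
    G.edgeSet = ↑(insert s(v, u) (insert s(v, w) (G.deleteIncidenceSet v).edgeFinset)) := by
  ext e
  induction e using Sym2.ind with
  | _ a b =>
  have hadj : ∀ x, G.Adj v x ↔ x = u ∨ x = w := fun x => by
    rw [← mem_neighborFinset, hN, mem_insert, mem_singleton]
  simp only [coe_insert, coe_edgeFinset, Set.mem_insert_iff, edgeSet_deleteIncidenceSet,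
    Set.mem_sdiff, mem_edgeSet, mk'_mem_incidenceSet_iff, Sym2.eq_iff]
  constructor
  · intro h
    by_cases hv : v = a ∨ v = b
    · rcases hv with rfl | rfl
      · rcases (hadj b).1 h with rfl | rfl <;> simp
      · rcases (hadj a).1 h.symm with rfl | rfl <;> simp
    · exact Or.inr (Or.inr ⟨h, fun h' => hv h'.2⟩)
  · rintro ((⟨rfl, rfl⟩ | ⟨rfl, rfl⟩) | (⟨rfl, rfl⟩ | ⟨rfl, rfl⟩) | ⟨h, -⟩)
    <;> first | exact h | exact (hadj _).2 (by tauto) | exact ((hadj _).2 (by tauto)).symm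

lemma mk_mem_seenEdges_deleteIncidenceSet {t : Sym2 V} {x : V} (ht : v ∈ t) (hvu : G.Adj v u)
    (hux : G.Adj u x) (hx : x ≠ v) :
    s(u, x) ∈ seenEdges G (G.deleteIncidenceSet v).edgeFinset t := by
  refine mem_seenEdges.2 ⟨mk_mem_edgeFinset_deleteIncidenceSet hux hvu.ne' hx, ?_,
    v, ht, u, Sym2.mem_mk_left u x, Or.inr hvu⟩
  rintro rfl
  rcases Sym2.mem_iff.1 ht with h | h
  exacts [hvu.ne h, hx h.symm]

lemma card_nearEdges_deleteIncidenceSet_self_le (hN : G.neighborFinset v = {u, w}) (huw : u ≠ w) :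
    #(nearEdges G (G.deleteIncidenceSet v) v u) ≤ G.degree w - 1 := by
  refine card_nearEdges_le.trans ?_
  have hvw : G.Adj v w := by simp [← mem_neighborFinset, hN]
  rw [hN, erase_insert (by simpa using huw), sum_singleton]
  simpa using card_incidenceFinset_sdiff_le (deleteIncidenceSet_le G v) hvw

lemma card_nearEdges_deleteIncidenceSet_le {k : ℕ}
    (hore : ∀ x y, G.Adj x y → G.degree x + G.degree y ≤ k) (hvu : G.Adj v u) :
    #(nearEdges G (G.deleteIncidenceSet v) u v) ≤ (G.degree u - 1) * (k - G.degree u) := by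
  simpa [erase_idem, card_erase_of_mem, hvu.symm] using
    card_nearEdges_le_of_ore (v := v) hore hvu.symm

lemma card_seenEdges_le {k : ℕ} (hore : ∀ x y, G.Adj x y → G.degree x + G.degree y ≤ k)
    (hN : G.neighborFinset v = {u, w}) (huw : u ≠ w) :
    #(seenEdges G (G.deleteIncidenceSet v).edgeFinset s(v, u)) ≤
      (G.degree w - 1) + (G.degree u - 1) * (k - G.degree u) := by
  have hvu : G.Adj v u := by simp [← mem_neighborFinset, hN]
  exact (card_le_card seenEdges_subset_nearEdges).trans ((card_union_le _ _).trans
    (Nat.add_le_add (card_nearEdges_deleteIncidenceSet_self_le hN huw)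
      (card_nearEdges_deleteIncidenceSet_le hore hvu)))

/-- The edge `s(w, z)` is counted both through `v` and through `u`. -/
lemma card_seenEdges_lt_of_adj_adj {k : ℕ}
    (hore : ∀ x y, G.Adj x y → G.degree x + G.degree y ≤ k)
    (hN : G.neighborFinset v = {u, w}) (huw : u ≠ w) {z : V} (hz : z ≠ v) (huz : G.Adj u z)
    (hwz : G.Adj w z) :
    #(seenEdges G (G.deleteIncidenceSet v).edgeFinset s(v, u)) <
      (G.degree w - 1) + (G.degree u - 1) * (k - G.degree u) := by
  have hvu : G.Adj v u := by simp [← mem_neighborFinset, hN]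
  have hvw : G.Adj v w := by simp [← mem_neighborFinset, hN]
  have hwz' : s(w, z) ∈ (G.deleteIncidenceSet v).incidenceFinset w ∩
      (G.deleteIncidenceSet v).incidenceFinset z := by
    simp [mem_incidenceFinset, incidenceSet, deleteIncidenceSet_adj, hwz, hvw.ne', hz]
  have hmem : s(w, z) ∈ nearEdges G (G.deleteIncidenceSet v) v u ∩
      nearEdges G (G.deleteIncidenceSet v) u v := by
    simp only [nearEdges, mem_inter, mem_union, mem_biUnion, mem_sdiff, mem_erase,
      mem_neighborFinset]
    refine ⟨Or.inr ⟨w, ⟨huw.symm, hvw⟩, (mem_inter.1 hwz').1, by simp⟩,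
      Or.inr ⟨z, ⟨hz, huz⟩, (mem_inter.1 hwz').2, fun h => ?_⟩⟩
    rw [mem_incidenceFinset, incidenceSet, Set.mem_ofPred_eq, Sym2.mem_iff] at h
    rcases h.2 with h | h
    exacts [huw h, huz.ne h]
  have := card_union_add_card_inter (nearEdges G (G.deleteIncidenceSet v) v u)
    (nearEdges G (G.deleteIncidenceSet v) u v)
  have := card_pos.2 ⟨_, hmem⟩
  have := card_le_card (seenEdges_subset_nearEdges (G := G) (K := G.deleteIncidenceSet v) (a := v)
    (b := u))
  have := card_nearEdges_deleteIncidenceSet_self_le hN huw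
  have := card_nearEdges_deleteIncidenceSet_le hore hvu
  omega

lemma card_seenEdges_mk_le_eleven (hore : ∀ x y, G.Adj x y → G.degree x + G.degree y ≤ 7)
    (hvu : G.Adj v u) (hu : G.degree u = 5) {x : V} (hux : G.Adj u x) (hx : x ≠ v) :
    #(seenEdges G (G.deleteIncidenceSet v).edgeFinset s(u, x)) ≤ 11 := by
  have hnear_u := card_nearEdges_le_of_ore (v := v) hore hux
  have hnear_x := card_nearEdges_le_of_ore (v := v) hore hux.symm
  rw [card_erase_of_mem (by simpa using ⟨hx.symm, hvu.symm⟩),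
    card_erase_of_mem (by simpa using hux), card_neighborFinset_eq_degree, hu] at hnear_u
  have hm := (card_erase_le (s := (G.neighborFinset x).erase u) (a := v)).trans_eq
    (card_erase_of_mem (s := G.neighborFinset x) (by simpa using hux.symm))
  have hdx : G.degree x ≤ 2 := by have := hore u x hux; omega
  have := card_le_card (seenEdges_subset_nearEdges (G := G) (K := G.deleteIncidenceSet v) (a := u)
    (b := x))
  have := card_union_le (nearEdges G (G.deleteIncidenceSet v) u x)
    (nearEdges G (G.deleteIncidenceSet v) x u)
  rw [card_neighborFinset_eq_degree] at hm
  have : #(((G.neighborFinset x).erase u).erase v) * (7 - G.degree x) ≤ 5 := by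
    interval_cases h : G.degree x <;> omega
  omega

lemma exists_neighborFinset_eq_pair (hv : G.degree v = 2) (hu : G.Adj v u) :
    ∃ w, u ≠ w ∧ G.neighborFinset v = {u, w} := by
  obtain ⟨a, b, hab, h⟩ := card_eq_two.1 ((card_neighborFinset_eq_degree G v).trans hv)
  have hu' : u ∈ ({a, b} : Finset V) := h ▸ (mem_neighborFinset G v u).2 hu
  rcases mem_insert.1 hu' with rfl | hu'
  · exact ⟨b, hab, h⟩
  · rw [mem_singleton] at hu'
    subst hu'
    exact ⟨a, hab.symm, h.trans (pair_comm a u)⟩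

lemma HasStrongColoring.exists_isStrongColoringOn_deleteIncidenceSet {n : ℕ} [NeZero n]
    (h : HasStrongColoring (DelV G v) n) :
    ∃ g : Sym2 V → Fin n, IsStrongColoringOn G (G.deleteIncidenceSet v).edgeFinset g := by
  rw [delV_eq_deleteIncidenceSet] at h
  obtain ⟨f, hf⟩ := h
  refine ⟨fun e => if he : e ∈ (G.deleteIncidenceSet v).edgeSet then f ⟨e, he⟩ else 0,
    fun e he e' he' hee' => ?_⟩
  rw [mem_edgeFinset] at he he'
  simpa [he, he'] using hf ⟨e, he⟩ ⟨e', he'⟩ (hee'.deleteIncidenceSet he he')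

lemma hasStrongColoring_of_degree_le_three
    (hore : ∀ x y, G.Adj x y → G.degree x + G.degree y ≤ 7) (hN : G.neighborFinset v = {u, w})
    (huw : u ≠ w) {g : Sym2 V → Fin 13}
    (hg : IsStrongColoringOn G (G.deleteIncidenceSet v).edgeFinset g) (hu : G.degree u ≤ 3)
    (hw : G.degree w ≤ 5) : HasStrongColoring G 13 := by
  have hvu : G.Adj v u := by simp [← mem_neighborFinset, hN]
  have hvw : G.Adj v w := by simp [← mem_neighborFinset, hN]
  have hu₀ := (G.degree_pos_iff_exists_adj u).2 ⟨v, hvu.symm⟩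
  have hw₀ := (G.degree_pos_iff_exists_adj w).2 ⟨v, hvw.symm⟩
  have h₁ := card_seenEdges_le hore hN huw
  have h₂ := card_seenEdges_le hore (hN.trans (pair_comm u w)) huw.symm
  have : (G.degree u - 1) * (7 - G.degree u) ≤ 8 := by interval_cases G.degree u <;> omega
  have : (G.degree w - 1) * (7 - G.degree w) ≤ 9 := by interval_cases G.degree w <;> omega
  exact hg.hasStrongColoring_of_card_seenEdges (edgeSet_eq_insert_insert hN) (by omega) (by omega)

lemma hasStrongColoring_of_degree_five_four
    (hore : ∀ x y, G.Adj x y → G.degree x + G.degree y ≤ 7) (hN : G.neighborFinset v = {u, w})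
    (huw : u ≠ w) {g : Sym2 V → Fin 13}
    (hg : IsStrongColoringOn G (G.deleteIncidenceSet v).edgeFinset g) (hu : G.degree u = 5)
    (hw : G.degree w = 4) : HasStrongColoring G 13 := by
  have hvu : G.Adj v u := by simp [← mem_neighborFinset, hN]
  obtain ⟨x, hx, hxv⟩ := exists_mem_ne (s := G.neighborFinset u) (by simp [hu]) v
  rw [mem_neighborFinset] at hx
  have h₁ := card_seenEdges_le hore hN huw
  have h₂ := card_seenEdges_le hore (hN.trans (pair_comm u w)) huw.symm
  rw [hu, hw] at h₁ h₂
  exact hg.hasStrongColoring_of_recolor (edgeSet_eq_insert_insert hN)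
    (mk_mem_seenEdges_deleteIncidenceSet (Sym2.mem_mk_left v w) hvu hx hxv)
    (by have := card_seenEdges_mk_le_eleven hore hvu hu hx hxv; omega) (by omega) h₂

/-- `s(u, x)` sees at most the three vertices of `N[x]` among the four neighbours of `w` other
than `v`. -/
lemma exists_adj_not_edgeSees (hore : ∀ x y, G.Adj x y → G.degree x + G.degree y ≤ 7)
    (hu : G.degree u = 5) (hw : G.degree w = 5)
    (hz : ∀ z, z ≠ v → G.Adj u z → ¬ G.Adj w z) {x : V} (hx : G.Adj u x) (hxv : x ≠ v) :
    ∃ y, G.Adj w y ∧ y ≠ v ∧ s(u, x) ≠ s(w, y) ∧ ¬ EdgeSees G s(w, y) s(u, x) := by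
  have hnuw : ¬ G.Adj u w := fun h => by have := hore u w h; omega
  have hdx : #(insert x (G.neighborFinset x)) < #((G.neighborFinset w).erase v) := by
    have := hore u x hx
    have := card_insert_le x (G.neighborFinset x)
    have := pred_card_le_card_erase (s := G.neighborFinset w) (a := v)
    simp only [card_neighborFinset_eq_degree] at *
    omega
  obtain ⟨y, hy, hyx⟩ := exists_mem_notMem_of_card_lt_card hdx
  obtain ⟨hyv, hwy⟩ := mem_erase.1 hy
  rw [mem_neighborFinset] at hwy
  rw [mem_insert, mem_neighborFinset, not_or] at hyx
  have hyu : y ≠ u := by rintro rfl; exact hnuw hwy.symm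
  have hwu : w ≠ u := by rintro rfl; exact hz x hxv hx hx
  have hwx : w ≠ x := by rintro rfl; exact hnuw hx
  refine ⟨y, hwy, hyv, fun h => ?_, not_edgeSees_of_forall ?_⟩
  · rcases Sym2.eq_iff.1 h with ⟨h, -⟩ | ⟨h, -⟩
    exacts [hwu h.symm, hyu h.symm]
  · simp only [Sym2.mem_iff, forall_eq_or_imp, forall_eq]
    exact ⟨⟨⟨hwu, fun h => hnuw h.symm⟩, hwx, hz x hxv hx⟩,
      ⟨hyu, fun h => hz y hyv h.symm hwy⟩, hyx.1, fun h => hyx.2 h.symm⟩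

lemma hasStrongColoring_of_degree_five_five
    (hore : ∀ x y, G.Adj x y → G.degree x + G.degree y ≤ 7) (hN : G.neighborFinset v = {u, w})
    (huw : u ≠ w) {g : Sym2 V → Fin 13}
    (hg : IsStrongColoringOn G (G.deleteIncidenceSet v).edgeFinset g) (hu : G.degree u = 5)
    (hw : G.degree w = 5) : HasStrongColoring G 13 := by
  have hvu : G.Adj v u := by simp [← mem_neighborFinset, hN]
  have hvw : G.Adj v w := by simp [← mem_neighborFinset, hN]
  have hN' : G.neighborFinset v = {w, u} := hN.trans (pair_comm u w)
  have h₂ := card_seenEdges_le hore hN' huw.symm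
  by_cases hz : ∃ z, z ≠ v ∧ G.Adj u z ∧ G.Adj w z
  · obtain ⟨z, hz, huz, hwz⟩ := hz
    have h₁ := card_seenEdges_lt_of_adj_adj hore hN huw hz huz hwz
    rw [hu, hw] at h₁ h₂
    exact hg.hasStrongColoring_of_card_seenEdges (edgeSet_eq_insert_insert hN') (by omega)
      (by omega)
  simp only [not_exists, not_and] at hz
  have h₁ := card_seenEdges_le hore hN huw
  rw [hu, hw] at h₁ h₂
  obtain ⟨x, hx, hxv⟩ := exists_mem_ne (s := G.neighborFinset u) (by simp [hu]) v
  rw [mem_neighborFinset] at hx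
  obtain ⟨y, hy, hyv, hne, hsees⟩ := exists_adj_not_edgeSees hore hu hw hz hx hxv
  have hmem : ∀ {a b}, G.Adj v a → G.Adj a b → b ≠ v →
      s(a, b) ∈ seenEdges G (G.deleteIncidenceSet v).edgeFinset s(v, u) ∧
        s(a, b) ∈ seenEdges G (G.deleteIncidenceSet v).edgeFinset s(v, w) := fun hva hab hbv =>
    ⟨mk_mem_seenEdges_deleteIncidenceSet (Sym2.mem_mk_left v u) hva hab hbv,
      mk_mem_seenEdges_deleteIncidenceSet (Sym2.mem_mk_left v w) hva hab hbv⟩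
  exact hg.hasStrongColoring_of_invisible_pair (edgeSet_eq_insert_insert hN) (by omega) (by omega)
    (hmem hvu hx hxv) (hmem hvw hy hyv) hne hsees
    (by have := card_seenEdges_mk_le_eleven hore hvu hu hx hxv; omega)
    (by have := card_seenEdges_mk_le_eleven hore hvw hw hy hyv; omega)

lemma hasStrongColoring_of_degree_ne_four
    (hore : ∀ x y, G.Adj x y → G.degree x + G.degree y ≤ 7) (hN : G.neighborFinset v = {u, w})
    (huw : u ≠ w) {g : Sym2 V → Fin 13}
    (hg : IsStrongColoringOn G (G.deleteIncidenceSet v).edgeFinset g) (hu : G.degree u ≠ 4) :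
    HasStrongColoring G 13 := by
  have hvu : G.Adj v u := by simp [← mem_neighborFinset, hN]
  have hvw : G.Adj v w := by simp [← mem_neighborFinset, hN]
  have hv : G.degree v = 2 := by rw [← card_neighborFinset_eq_degree, hN, card_pair huw]
  have := hore v u hvu
  have := hore v w hvw
  have hN' : G.neighborFinset v = {w, u} := hN.trans (pair_comm u w)
  rcases le_or_gt (G.degree u) 3 with hu3 | hu3
  · exact hasStrongColoring_of_degree_le_three hore hN huw hg hu3 (by omega)
  rcases le_or_gt (G.degree w) 3 with hw3 | hw3
  · exact hasStrongColoring_of_degree_le_three hore hN' huw.symm hg hw3 (by omega)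
  obtain hw | hw : G.degree w = 4 ∨ G.degree w = 5 := by omega
  · exact hasStrongColoring_of_degree_five_four hore hN huw hg (by omega) hw
  · exact hasStrongColoring_of_degree_five_five hore hN huw hg (by omega) hw

end Configuration

end SimpleGraph

/-- In a minimal counterexample with θ ≤ 7, χ'ₛ > 13, every 2-vertex is
adjacent to two 4-vertices. -/
theorem stmt5 [Fintype V] (H : SimpleGraph V) [DecidableRel H.Adj]
    (hore : ∀ u w, H.Adj u w → H.degree u + H.degree w ≤ 7)
    (hnc : ¬ HasStrongColoring H 13)
    (hmin : ∀ v, HasStrongColoring (DelV H v) 13) :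
    ∀ v, H.degree v = 2 → ∀ u, H.Adj v u → H.degree u = 4 := by
  classical
  intro v hv u hvu
  obtain ⟨w, huw, hN⟩ := exists_neighborFinset_eq_pair hv hvu
  obtain ⟨g, hg⟩ := (hmin v).exists_isStrongColoringOn_deleteIncidenceSet
  by_contra hu
  exact hnc (hasStrongColoring_of_degree_ne_four hore hN huw hg hu)
end

section
/- Let H be a finite simple graph whose vertices all have degree in {2,3,4}, such that: every 2-vertex has two 4-neighbors; every 4-vertex has at most one 2-neighbor; 3-vertices are partitioned by number of 4-neighbors into classes 3(A) (three 4-neighbors), 3(B) (two), 3(C) (one), 3(D) (none); every 3(D)-vertex adjacent to a 3(D)-vertex is adjacent to two 3(B)-vertices; a 3(C)-vertex is called weak if both its 3-neighbors are 3(D)-vertices, strong if at least one 3-neighbor is a 3(B)-vertex, moderate otherwise; every 3(D)-vertex has at most one weak 3(C)-neighbor; and whenever a 3(D)-vertex is adjacent to three 3(C)-vertices one of which is weak, the other two are strong. Then the average degree of H is at least 34/11, i.e. 2|E(H)| ≥ (34/11)|V(H)|. -/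
open SimpleGraph

variable {V : Type*}

/-- Number of 4-neighbors of a vertex. -/
noncomputable def n4 [Fintype V] (H : SimpleGraph V) [DecidableRel H.Adj] (x : V) : ℕ :=
  {y | H.Adj x y ∧ H.degree y = 4}.ncard

/-- 3(B)-vertex: 3-vertex with exactly two 4-neighbors. -/
def Is3B [Fintype V] (H : SimpleGraph V) [DecidableRel H.Adj] (x : V) : Prop :=
  H.degree x = 3 ∧ n4 H x = 2

/-- 3(C)-vertex: 3-vertex with exactly one 4-neighbor. -/
def Is3C [Fintype V] (H : SimpleGraph V) [DecidableRel H.Adj] (x : V) : Prop :=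
  H.degree x = 3 ∧ n4 H x = 1

/-- 3(D)-vertex: 3-vertex with no 4-neighbor. -/
def Is3D [Fintype V] (H : SimpleGraph V) [DecidableRel H.Adj] (x : V) : Prop :=
  H.degree x = 3 ∧ n4 H x = 0

/-- Weak 3(C)-vertex: both its 3-neighbors are 3(D)-vertices. -/
def IsWeak3C [Fintype V] (H : SimpleGraph V) [DecidableRel H.Adj] (x : V) : Prop :=
  Is3C H x ∧ ∀ y, H.Adj x y → H.degree y = 3 → Is3D H y

/-- Strong 3(C)-vertex: at least one 3-neighbor is a 3(B)-vertex. -/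
def IsStrong3C [Fintype V] (H : SimpleGraph V) [DecidableRel H.Adj] (x : V) : Prop :=
  Is3C H x ∧ ∃ y, H.Adj x y ∧ Is3B H y

/-!
Discharging with all charges multiplied by 33, so that they are integers: a vertex `v` starts with
`33 d(v) - 102`, these sum to `66 |E| - 102 |V|`, and the rules R1–R5 (`transfer`) move charge
along edges so that every vertex ends up nonnegative.

A 4-vertex gives away at most `18 + 3 · 4 = 30`; a 2-vertex receives `2 · 18`. A 3-vertex starts
at `-3`. A 3(A)- or 3(B)-vertex, or a strong 3(C)-vertex, has at least two neighbours sending it 3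
each (its 4-neighbours and 3(B)-neighbours) and sends at most 3 to each other neighbour; any other
3(C)-vertex receives 4 and sends at most 1. A 3(D)-vertex receives 6 from two 3(B)-neighbours if it
has a 3(D)-neighbour, and 3 from a 3(B)-neighbour if it has one; otherwise all its neighbours are
3(C), and either one is weak and the other two are strong, or each sends it at least 1.
-/

open Finset

section Discharging

open Classical

variable [Fintype V] (H : SimpleGraph V) [DecidableRel H.Adj]

noncomputable def transfer (x y : V) : ℤ :=
  if ¬ H.Adj x y then 0
  else if H.degree x = 4 then
    if H.degree y = 2 then 18 else if Is3C H y then 4 else if H.degree y = 3 then 3 else 0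
  else if Is3B H x then
    if H.degree y = 3 then 3 else 0
  else if Is3C H x ∧ ¬ IsWeak3C H x then
    if Is3D H y then (if IsStrong3C H x then 3 else 1) else 0
  else 0

noncomputable def inflow (v : V) : ℤ := ∑ u, transfer H u v

noncomputable def outflow (v : V) : ℤ := ∑ u, transfer H v u

noncomputable def finalCharge (v : V) : ℤ := 33 * H.degree v - 102 + inflow H v - outflow H v

variable {H}

lemma transfer_nonneg (x y : V) : 0 ≤ transfer H x y := by
  unfold transfer; split_ifs <;> norm_num

lemma transfer_of_not_adj {x y : V} (h : ¬ H.Adj x y) : transfer H x y = 0 := by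
  simp [transfer, h]

lemma transfer_le_of_degree_four {x y : V} (hx : H.degree x = 4) :
    transfer H x y ≤ if H.degree y = 2 then 18 else 4 := by
  unfold transfer; split_ifs <;> simp_all

lemma transfer_of_degree_four_of_degree_two {x y : V} (hxy : H.Adj x y) (hx : H.degree x = 4)
    (hy : H.degree y = 2) : transfer H x y = 18 := by
  simp [transfer, hxy, hx, hy]

lemma three_le_transfer_of_degree_four {x y : V} (hxy : H.Adj x y) (hx : H.degree x = 4)
    (hy : H.degree y = 3) : 3 ≤ transfer H x y := by
  unfold transfer; split_ifs <;> simp_all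

lemma transfer_of_degree_four_of_is3C {x y : V} (hxy : H.Adj x y) (hx : H.degree x = 4)
    (hy : Is3C H y) : transfer H x y = 4 := by
  simp [transfer, hxy, hx, hy, hy.1]

lemma transfer_of_is3B {x y : V} (hxy : H.Adj x y) (hx : Is3B H x) :
    transfer H x y = if H.degree y = 3 then 3 else 0 := by
  simp [transfer, hxy, hx, hx.1]

lemma Is3C.not_is3B {x : V} (hx : Is3C H x) : ¬ Is3B H x := fun h => by
  have := h.2; have := hx.2; omega

lemma IsWeak3C.not_isStrong3C {x : V} (hx : IsWeak3C H x) : ¬ IsStrong3C H x := by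
  rintro ⟨-, y, hxy, hy⟩
  have := (hx.2 y hxy hy.1).2; have := hy.2; omega

lemma transfer_of_isStrong3C {x y : V} (hxy : H.Adj x y) (hx : IsStrong3C H x) :
    transfer H x y = if Is3D H y then 3 else 0 := by
  have hw : ¬ IsWeak3C H x := fun h => h.not_isStrong3C hx
  simp [transfer, hxy, hx, hx.1.1, hx.1.not_is3B, hx.1, hw]

lemma transfer_of_is3C_of_not_isStrong3C {x y : V} (hxy : H.Adj x y) (hx : Is3C H x)
    (hw : ¬ IsWeak3C H x) (hs : ¬ IsStrong3C H x) :
    transfer H x y = if Is3D H y then 1 else 0 := by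
  simp [transfer, hxy, hx, hx.1, hx.not_is3B, hw, hs]

lemma one_le_transfer_of_is3C {x y : V} (hxy : H.Adj x y) (hx : Is3C H x)
    (hw : ¬ IsWeak3C H x) (hy : Is3D H y) : 1 ≤ transfer H x y := by
  by_cases hs : IsStrong3C H x
  · simp [transfer_of_isStrong3C hxy hs, hy]
  · simp [transfer_of_is3C_of_not_isStrong3C hxy hx hw hs, hy]

lemma transfer_eq_zero_of_not_sender {x y : V} (hx : H.degree x ≠ 4) (hB : ¬ Is3B H x)
    (hC : Is3C H x → IsWeak3C H x) : transfer H x y = 0 := by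
  unfold transfer; split_ifs <;> tauto

lemma sum_finalCharge :
    ∑ v, finalCharge H v = 66 * H.edgeSet.ncard - 102 * Fintype.card V := by
  have hflow : ∑ v, inflow H v = ∑ v, outflow H v := Finset.sum_comm
  have hdeg : ∑ v, (H.degree v : ℤ) = 2 * H.edgeSet.ncard := by
    rw [← coe_edgeFinset, Set.ncard_coe_finset]
    exact_mod_cast H.sum_degrees_eq_twice_card_edges
  simp only [finalCharge, sum_sub_distrib, sum_add_distrib, ← mul_sum, hflow, hdeg, sum_const,
    card_univ, nsmul_eq_mul]
  ring

lemma degree_eq_card (v : V) : H.degree v = #{u | H.Adj v u} := by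
  rw [← card_neighborFinset_eq_degree, neighborFinset_eq_filter]

lemma ncard_setOf_adj_and (v : V) (p : V → Prop) [DecidablePred p] :
    {u | H.Adj v u ∧ p u}.ncard = #{u | H.Adj v u ∧ p u} := by
  rw [← Set.ncard_coe_finset, coe_filter]; simp

lemma n4_eq_card (v : V) : n4 H v = #{u | H.Adj v u ∧ H.degree u = 4} := by
  rw [n4, ncard_setOf_adj_and]

variable (H) in
lemma card_adj_add_card_adj_le {p q : V → Prop} [DecidablePred p] [DecidablePred q]
    (hpq : ∀ u, p u → ¬ q u) (v : V) :
    #{u | H.Adj v u ∧ p u} + #{u | H.Adj v u ∧ q u} ≤ H.degree v := by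
  rw [degree_eq_card, ← card_union_of_disjoint
    (disjoint_filter.2 fun u _ hp hq => hpq u hp.2 hq.2)]
  exact card_le_card fun u => by simp only [mem_union, mem_filter]; tauto

lemma one_lt_card_adj_and {p : V → Prop} [DecidablePred p] {v w y : V} (hvw : H.Adj v w)
    (hvy : H.Adj v y) (hwy : w ≠ y) (hw : p w) (hy : p y) : 1 < #{u | H.Adj v u ∧ p u} :=
  one_lt_card.2 ⟨w, by simp [hvw, hw], y, by simp [hvy, hy], hwy⟩

lemma n4_lt_degree {u v : V} (huv : H.Adj u v) (hv : H.degree v ≠ 4) : n4 H u < H.degree u := by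
  have hcount := card_adj_add_card_adj_le H (p := (H.degree · = 4)) (q := (H.degree · ≠ 4))
    (fun _ h h' => h' h) u
  have : 0 < #{x | H.Adj u x ∧ H.degree x ≠ 4} := card_pos.2 ⟨v, by simp [huv, hv]⟩
  rw [n4_eq_card]; omega

lemma Is3C.exists_adj_degree_four {v : V} (hv : Is3C H v) :
    ∃ w, H.Adj v w ∧ H.degree w = 4 := by
  obtain ⟨w, hw⟩ := card_pos.1 (n4_eq_card (H := H) v ▸ hv.2 ▸ Nat.one_pos)
  exact ⟨w, (mem_filter.1 hw).2⟩

lemma card_mul_le_inflow {v : V} (S : Finset V) {c : ℤ} (h : ∀ u ∈ S, c ≤ transfer H u v) :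
    #S * c ≤ inflow H v := by
  rw [← nsmul_eq_mul]
  exact (card_nsmul_le_sum S _ c h).trans
    (sum_le_univ_sum_of_nonneg fun u => transfer_nonneg u v)

lemma outflow_le {v : V} (p : V → Prop) [DecidablePred p] {a b : ℤ}
    (h : ∀ u, H.Adj v u → transfer H v u ≤ if p u then a else b) :
    outflow H v ≤ #{u | H.Adj v u ∧ p u} * a + #{u | H.Adj v u ∧ ¬ p u} * b := by
  calc outflow H v
      ≤ ∑ u, ((if H.Adj v u ∧ p u then a else 0) +
          if H.Adj v u ∧ ¬ p u then b else 0) := by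
        refine sum_le_sum fun u _ => ?_
        by_cases hvu : H.Adj v u
        · have := h u hvu; split_ifs at this ⊢ <;> simp_all
        · simp [transfer_of_not_adj hvu, hvu]
    _ = _ := by rw [sum_add_distrib, ← sum_filter, ← sum_filter, sum_const, sum_const,
        nsmul_eq_mul, nsmul_eq_mul]

lemma outflow_eq_zero_of_not_sender {v : V} (hv : H.degree v ≠ 4) (hB : ¬ Is3B H v)
    (hC : Is3C H v → IsWeak3C H v) : outflow H v = 0 :=
  sum_eq_zero fun _ _ => transfer_eq_zero_of_not_sender hv hB hC

lemma finalCharge_nonneg_of_degree_two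
    (h2 : ∀ x y, H.degree x = 2 → H.Adj x y → H.degree y = 4) {v : V} (hv : H.degree v = 2) :
    0 ≤ finalCharge H v := by
  have hin := card_mul_le_inflow (H.neighborFinset v) (c := 18) fun u hu => by
    have hvu := (mem_neighborFinset H v u).1 hu
    rw [transfer_of_degree_four_of_degree_two hvu.symm (h2 v u hv hvu) hv]
  have hout : outflow H v = 0 := outflow_eq_zero_of_not_sender (by omega)
    (fun h => by have := h.1; omega) fun h => by have := h.1; omega
  rw [card_neighborFinset_eq_degree] at hin
  unfold finalCharge; omega

lemma finalCharge_nonneg_of_degree_four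
    (h3 : ∀ x, H.degree x = 4 → {y | H.Adj x y ∧ H.degree y = 2}.ncard ≤ 1) {v : V}
    (hv : H.degree v = 4) : 0 ≤ finalCharge H v := by
  have hin : 0 ≤ inflow H v := sum_nonneg fun u _ => transfer_nonneg u v
  have hout := outflow_le (H.degree · = 2) fun u _ => transfer_le_of_degree_four (y := u) hv
  have hcount := card_adj_add_card_adj_le H (p := (H.degree · = 2))
    (q := fun u => ¬ H.degree u = 2) (fun _ h h' => h' h) v
  have hdeg2 := h3 v hv
  rw [ncard_setOf_adj_and] at hdeg2
  unfold finalCharge; omega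

lemma finalCharge_nonneg_of_degree_three {v : V} (hv : H.degree v = 3) (p : V → Prop)
    [DecidablePred p] (hp : 2 ≤ #{u | H.Adj v u ∧ p u})
    (hin : ∀ u, H.Adj v u → p u → 3 ≤ transfer H u v)
    (hout : ∀ u, H.Adj v u → transfer H v u ≤ if p u then 0 else 3) :
    0 ≤ finalCharge H v := by
  have hin' := card_mul_le_inflow {u | H.Adj v u ∧ p u} (c := 3) fun u hu => by
    rw [mem_filter] at hu; exact hin u hu.2.1 hu.2.2
  have hout' := outflow_le p hout
  have hcount := card_adj_add_card_adj_le H (p := p) (q := fun u => ¬ p u) (fun _ h h' => h' h) v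
  unfold finalCharge; omega

lemma finalCharge_nonneg_of_two_le_n4 {v : V} (hv : H.degree v = 3) (hn : 2 ≤ n4 H v) :
    0 ≤ finalCharge H v := by
  refine finalCharge_nonneg_of_degree_three hv (H.degree · = 4) (by rwa [← n4_eq_card])
    (fun u hvu hu => three_le_transfer_of_degree_four hvu.symm hu hv) fun u hvu => ?_
  by_cases hB : n4 H v = 2
  · rw [transfer_of_is3B hvu ⟨hv, hB⟩]; split_ifs <;> omega
  · rw [transfer_eq_zero_of_not_sender (by omega) (fun h => hB h.2)
      fun h => by have := h.2; omega]
    split_ifs <;> omega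

lemma outflow_le_one_of_is3C {v : V} (hv : Is3C H v) (hs : ¬ IsStrong3C H v) :
    outflow H v ≤ 1 := by
  by_cases hw : IsWeak3C H v
  · rw [outflow_eq_zero_of_not_sender (by rw [hv.1]; omega) hv.not_is3B fun _ => hw]; omega
  have hout := outflow_le (Is3D H) fun u hvu =>
    (transfer_of_is3C_of_not_isStrong3C hvu hv hw hs).le
  obtain ⟨w, hvw, hw4⟩ := hv.exists_adj_degree_four
  obtain ⟨y, hvy, hy3, hyD⟩ : ∃ y, H.Adj v y ∧ H.degree y = 3 ∧ ¬ Is3D H y := by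
    by_contra! h
    exact hw ⟨hv, h⟩
  have hnotD := one_lt_card_adj_and (p := fun u => ¬ Is3D H u) hvw hvy
    (fun h => by subst h; omega) (fun h => by have := h.1; omega) hyD
  have hcount := card_adj_add_card_adj_le H (p := Is3D H) (q := fun u => ¬ Is3D H u)
    (fun _ h h' => h' h) v
  rw [hv.1] at hcount; omega

lemma finalCharge_nonneg_of_is3C {v : V} (hv : Is3C H v) : 0 ≤ finalCharge H v := by
  obtain ⟨w, hvw, hw4⟩ := hv.exists_adj_degree_four
  by_cases hs : IsStrong3C H v
  · obtain ⟨y, hvy, hy⟩ := hs.2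
    refine finalCharge_nonneg_of_degree_three hv.1 (fun u => H.degree u = 4 ∨ Is3B H u)
      (one_lt_card_adj_and hvw hvy (fun h => by subst h; have := hy.1; omega) (.inl hw4)
        (.inr hy))
      (fun u hvu hu => ?_) fun u hvu => ?_
    · rcases hu with hu | hu
      · rw [transfer_of_degree_four_of_is3C hvu.symm hu hv]; omega
      · rw [transfer_of_is3B hvu.symm hu, if_pos hv.1]
    · have hD : H.degree u = 4 ∨ Is3B H u → ¬ Is3D H u := by
        rintro (h | h) hD
        · have := hD.1; omega
        · have := h.2; have := hD.2; omega
      rw [transfer_of_isStrong3C hvu hs]; split_ifs <;> tauto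
  · have hin := card_mul_le_inflow {w} (c := 4) fun u hu => by
      rw [mem_singleton.1 hu, transfer_of_degree_four_of_is3C hvw.symm hw4 hv]
    have hout := outflow_le_one_of_is3C hv hs
    have := hv.1
    rw [card_singleton] at hin
    unfold finalCharge; omega

lemma is3C_of_adj_is3D (h1 : ∀ x, H.degree x = 2 ∨ H.degree x = 3 ∨ H.degree x = 4)
    (h2 : ∀ x y, H.degree x = 2 → H.Adj x y → H.degree y = 4) {u v : V} (hv : Is3D H v)
    (hvu : H.Adj v u) (hD : ¬ Is3D H u) (hB : ¬ Is3B H u) : Is3C H u := by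
  have hu4 : H.degree u ≠ 4 := fun h => by
    have : 0 < n4 H v := by rw [n4_eq_card]; exact card_pos.2 ⟨u, by simp [hvu, h]⟩
    have := hv.2; omega
  have hu2 : H.degree u ≠ 2 := fun h => by have := h2 u v h hvu.symm; have := hv.1; omega
  have hu3 : H.degree u = 3 := by have := h1 u; omega
  have hlt := n4_lt_degree hvu.symm (by rw [hv.1]; omega)
  have hn0 : n4 H u ≠ 0 := fun h => hD ⟨hu3, h⟩
  have hn2 : n4 H u ≠ 2 := fun h => hB ⟨hu3, h⟩
  exact ⟨hu3, by omega⟩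

lemma three_le_inflow_of_forall_adj_is3C
    (h6 : ∀ x, Is3D H x → (∀ y, H.Adj x y → Is3C H y) →
        ∀ y, H.Adj x y → IsWeak3C H y → ∀ z, H.Adj x z → z ≠ y → IsStrong3C H z)
    {v : V} (hv : Is3D H v) (hC : ∀ u, H.Adj v u → Is3C H u) : 3 ≤ inflow H v := by
  by_cases hweak : ∃ w, H.Adj v w ∧ IsWeak3C H w
  · obtain ⟨w, hvw, hw⟩ := hweak
    have hin := card_mul_le_inflow ((H.neighborFinset v).erase w) (c := 3) fun u hu => by
      obtain ⟨huw, hvu⟩ := mem_erase.1 hu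
      rw [mem_neighborFinset] at hvu
      rw [transfer_of_isStrong3C hvu.symm (h6 v hv hC w hvw hw u hvu huw), if_pos hv]
    rw [card_erase_of_mem ((mem_neighborFinset H v w).2 hvw), card_neighborFinset_eq_degree,
      hv.1] at hin
    omega
  · push Not at hweak
    have hin := card_mul_le_inflow (H.neighborFinset v) (c := 1) fun u hu => by
      have hvu := (mem_neighborFinset H v u).1 hu
      exact one_le_transfer_of_is3C hvu.symm (hC u hvu) (hweak u hvu) hv
    rw [card_neighborFinset_eq_degree, hv.1] at hin
    omega

lemma three_le_inflow_of_is3D (h1 : ∀ x, H.degree x = 2 ∨ H.degree x = 3 ∨ H.degree x = 4)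
    (h2 : ∀ x y, H.degree x = 2 → H.Adj x y → H.degree y = 4)
    (h4 : ∀ x y, Is3D H x → H.Adj x y → Is3D H y → {z | H.Adj x z ∧ Is3B H z}.ncard = 2)
    (h6 : ∀ x, Is3D H x → (∀ y, H.Adj x y → Is3C H y) →
        ∀ y, H.Adj x y → IsWeak3C H y → ∀ z, H.Adj x z → z ≠ y → IsStrong3C H z)
    {v : V} (hv : Is3D H v) : 3 ≤ inflow H v := by
  by_cases hD : ∃ u, H.Adj v u ∧ Is3D H u
  · obtain ⟨u, hvu, hu⟩ := hD
    have hB := h4 v u hv hvu hu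
    have hin := card_mul_le_inflow {z | H.Adj v z ∧ Is3B H z} (c := 3) fun z hz => by
      rw [mem_filter] at hz; rw [transfer_of_is3B hz.2.1.symm hz.2.2, if_pos hv.1]
    rw [ncard_setOf_adj_and] at hB
    omega
  by_cases hB : ∃ u, H.Adj v u ∧ Is3B H u
  · obtain ⟨u, hvu, hu⟩ := hB
    simpa using card_mul_le_inflow {u} (c := 3) (by simp [transfer_of_is3B hvu.symm hu, hv.1])
  push Not at hD hB
  exact three_le_inflow_of_forall_adj_is3C h6 hv fun u hvu =>
    is3C_of_adj_is3D h1 h2 hv hvu (hD u hvu) (hB u hvu)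

lemma finalCharge_nonneg_of_is3D (h1 : ∀ x, H.degree x = 2 ∨ H.degree x = 3 ∨ H.degree x = 4)
    (h2 : ∀ x y, H.degree x = 2 → H.Adj x y → H.degree y = 4)
    (h4 : ∀ x y, Is3D H x → H.Adj x y → Is3D H y → {z | H.Adj x z ∧ Is3B H z}.ncard = 2)
    (h6 : ∀ x, Is3D H x → (∀ y, H.Adj x y → Is3C H y) →
        ∀ y, H.Adj x y → IsWeak3C H y → ∀ z, H.Adj x z → z ≠ y → IsStrong3C H z)
    {v : V} (hv : Is3D H v) : 0 ≤ finalCharge H v := by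
  have hin := three_le_inflow_of_is3D h1 h2 h4 h6 hv
  have hout : outflow H v = 0 := outflow_eq_zero_of_not_sender (by rw [hv.1]; omega)
    (fun h => by have := h.2; have := hv.2; omega) fun h => by have := h.2; have := hv.2; omega
  have := hv.1
  unfold finalCharge; omega

lemma finalCharge_nonneg (h1 : ∀ x, H.degree x = 2 ∨ H.degree x = 3 ∨ H.degree x = 4)
    (h2 : ∀ x y, H.degree x = 2 → H.Adj x y → H.degree y = 4)
    (h3 : ∀ x, H.degree x = 4 → {y | H.Adj x y ∧ H.degree y = 2}.ncard ≤ 1)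
    (h4 : ∀ x y, Is3D H x → H.Adj x y → Is3D H y → {z | H.Adj x z ∧ Is3B H z}.ncard = 2)
    (h6 : ∀ x, Is3D H x → (∀ y, H.Adj x y → Is3C H y) →
        ∀ y, H.Adj x y → IsWeak3C H y → ∀ z, H.Adj x z → z ≠ y → IsStrong3C H z)
    (v : V) : 0 ≤ finalCharge H v := by
  rcases h1 v with hv | hv | hv
  · exact finalCharge_nonneg_of_degree_two h2 hv
  · obtain hn | hn | hn : n4 H v = 0 ∨ n4 H v = 1 ∨ 2 ≤ n4 H v := by omega
    · exact finalCharge_nonneg_of_is3D h1 h2 h4 h6 ⟨hv, hn⟩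
    · exact finalCharge_nonneg_of_is3C ⟨hv, hn⟩
    · exact finalCharge_nonneg_of_two_le_n4 hv hn
  · exact finalCharge_nonneg_of_degree_four h3 hv

end Discharging

theorem stmt12_general [Fintype V] (H : SimpleGraph V) [DecidableRel H.Adj]
    (h1 : ∀ x, H.degree x = 2 ∨ H.degree x = 3 ∨ H.degree x = 4)
    (h2 : ∀ x y, H.degree x = 2 → H.Adj x y → H.degree y = 4)
    (h3 : ∀ x, H.degree x = 4 → {y | H.Adj x y ∧ H.degree y = 2}.ncard ≤ 1)
    (h4 : ∀ x y, Is3D H x → H.Adj x y → Is3D H y →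
        {z | H.Adj x z ∧ Is3B H z}.ncard = 2)
    (h6 : ∀ x, Is3D H x → (∀ y, H.Adj x y → Is3C H y) →
        ∀ y, H.Adj x y → IsWeak3C H y →
          ∀ z, H.Adj x z → z ≠ y → IsStrong3C H z) :
    (34 / 11 : ℚ) * Fintype.card V ≤ 2 * H.edgeSet.ncard := by
  have htotal : 0 ≤ ∑ v, finalCharge H v :=
    sum_nonneg fun v _ => finalCharge_nonneg h1 h2 h3 h4 h6 v
  rw [sum_finalCharge] at htotal
  have : (102 : ℚ) * Fintype.card V ≤ 66 * H.edgeSet.ncard := by exact_mod_cast (by omega)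
  linarith

/-- Discharging step for Theorem 1: the structural conditions force
average degree at least 34/11. -/
theorem stmt12 [Fintype V] (H : SimpleGraph V) [DecidableRel H.Adj]
    (h1 : ∀ x, H.degree x = 2 ∨ H.degree x = 3 ∨ H.degree x = 4)
    (h2 : ∀ x y, H.degree x = 2 → H.Adj x y → H.degree y = 4)
    (h3 : ∀ x, H.degree x = 4 → {y | H.Adj x y ∧ H.degree y = 2}.ncard ≤ 1)
    (h4 : ∀ x y, Is3D H x → H.Adj x y → Is3D H y →
        {z | H.Adj x z ∧ Is3B H z}.ncard = 2)
    (h5 : ∀ x, Is3D H x → {y | H.Adj x y ∧ IsWeak3C H y}.ncard ≤ 1)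
    (h6 : ∀ x, Is3D H x → (∀ y, H.Adj x y → Is3C H y) →
        ∀ y, H.Adj x y → IsWeak3C H y →
          ∀ z, H.Adj x z → z ≠ y → IsStrong3C H z) :
    (34 / 11 : ℚ) * Fintype.card V ≤ 2 * H.edgeSet.ncard :=
  stmt12_general H h1 h2 h3 h4 h6
end

section
/- Let S₁,…,S_n be finite sets of colors with |S_i| ≥ n − 1 for all i, and suppose there exist indices a ≠ b with S_a ∩ S_b = ∅. Then the family (S₁,…,S_n) has a system of distinct representatives. -/
/-!
Hall's condition `#J ≤ #(⋃_{j ∈ J} S j)` holds for every `J`: a proper nonempty subfamily has at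
most `n - 1` members, fewer than any single one of its sets; the whole family contains the
disjoint pair, whose union alone already has `2 (n - 1) ≥ n` elements.
-/

open Finset

section HallCondition

variable {ι α : Type*} [Fintype ι] [DecidableEq α] (S : ι → Finset α)

theorem Finset.card_le_card_biUnion_of_ne_univ (hcard : ∀ i, Fintype.card ι - 1 ≤ #(S i))
    {J : Finset ι} (hJ : J ≠ univ) : #J ≤ #(J.biUnion S) := by
  obtain rfl | ⟨j, hj⟩ := J.eq_empty_or_nonempty
  · simp
  calc #J ≤ Fintype.card ι - 1 := Nat.le_sub_one_of_lt ((card_lt_iff_ne_univ J).mpr hJ)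
    _ ≤ #(S j) := hcard j
    _ ≤ #(J.biUnion S) := card_le_card (subset_biUnion_of_mem S hj)

theorem Finset.card_univ_le_card_biUnion_of_disjoint (hcard : ∀ i, Fintype.card ι - 1 ≤ #(S i))
    {a b : ι} (hab : a ≠ b) (hdisj : Disjoint (S a) (S b)) :
    Fintype.card ι ≤ #(univ.biUnion S) := by
  have htwo : 1 < Fintype.card ι := Fintype.one_lt_card_iff.mpr ⟨a, b, hab⟩
  have hpair : S a ∪ S b ⊆ univ.biUnion S :=
    union_subset (subset_biUnion_of_mem S (mem_univ a)) (subset_biUnion_of_mem S (mem_univ b))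
  calc Fintype.card ι ≤ #(S a) + #(S b) := by have := hcard a; have := hcard b; omega
    _ = #(S a ∪ S b) := (card_union_of_disjoint hdisj).symm
    _ ≤ #(univ.biUnion S) := card_le_card hpair

theorem Finset.card_le_card_biUnion_of_disjoint (hcard : ∀ i, Fintype.card ι - 1 ≤ #(S i))
    {a b : ι} (hab : a ≠ b) (hdisj : Disjoint (S a) (S b)) (J : Finset ι) :
    #J ≤ #(J.biUnion S) := by
  by_cases hJ : J = univ
  · subst hJ
    simpa using card_univ_le_card_biUnion_of_disjoint S hcard hab hdisj
  · exact card_le_card_biUnion_of_ne_univ S hcard hJ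

end HallCondition

theorem stmt14_general {α : Type*} (n : ℕ) (S : Fin n → Finset α)
    (hcard : ∀ i, n - 1 ≤ (S i).card) (a b : Fin n) (hab : a ≠ b)
    (hdisj : Disjoint (S a) (S b)) :
    ∃ c : Fin n → α, Function.Injective c ∧ ∀ i, c i ∈ S i := by
  classical
  refine (all_card_le_biUnion_card_iff_existsInjective' S).mp fun J => ?_
  exact card_le_card_biUnion_of_disjoint S (by simpa using hcard) hab hdisj J

/-- Hall-type lemma: n finite sets each of size ≥ n − 1, two of which are
disjoint, admit a system of distinct representatives. -/
theorem stmt14 {α : Type*} [DecidableEq α] (n : ℕ) (S : Fin n → Finset α)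
    (hcard : ∀ i, n - 1 ≤ (S i).card) (a b : Fin n) (hab : a ≠ b)
    (hdisj : Disjoint (S a) (S b)) :
    ∃ c : Fin n → α, Function.Injective c ∧ ∀ i, c i ∈ S i :=
  stmt14_general n S hcard a b hab hdisj
end
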